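/- arXiv:1908.05921 — 2 statements merged into one kernel-verified Lean document; each statement's English description precedes it below -/
import Mathlib

section
/- Let U be a nontrivial uniform submodule of a left R-module M with a nonzero complement C contained in soc(M), and suppose C is the unique complement of U. If there exist a simple submodule F not contained in U, a nonzero f ∈ F, and a nonzero u ∈ U such that for all r ∈ R, ru = 0 implies rf = 0, then U has degree greater than 1 in the proper sum-essential graph N(M). -/
/-!
The first neighbour of `U` is `C` itself. For the second, the annihilator condition makes
`T = R (u - f)` (the graph of `r • u ↦ -r • f`) meet `F` trivially, while `U + T` contains `F`.
Enlarging `T` by a complement `E` of `U + F` gives a submodule `T + E` that still misses `F`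
(modularity) but whose sum with `U` contains the essential submodule `U + F + E`. Uniqueness of
the complement of `U` forces `F ≤ C`, so `T + E ≠ C`.
-/

variable {R : Type*} [Ring R] {M : Type*} [AddCommGroup M] [Module R M]

/-- `N` is an essential submodule of `M`: it intersects every nonzero submodule nontrivially. -/
def IsEssentialSubmodule (N : Submodule R M) : Prop :=
  ∀ B : Submodule R M, B ≠ ⊥ → N ⊓ B ≠ ⊥

/-- A vertex of the sum-essential graph `S(M)`: a nontrivial submodule. -/
def IsVertexS (N : Submodule R M) : Prop := N ≠ ⊥ ∧ N ≠ ⊤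

/-- Adjacency in the sum-essential graph `S(M)`. -/
def AdjS (A B : Submodule R M) : Prop :=
  IsVertexS A ∧ IsVertexS B ∧ A ≠ B ∧ IsEssentialSubmodule (A ⊔ B)

/-- A vertex of the proper sum-essential graph `N(M)`: a nontrivial non-essential submodule. -/
def IsVertexP (N : Submodule R M) : Prop :=
  N ≠ ⊥ ∧ N ≠ ⊤ ∧ ¬ IsEssentialSubmodule N

/-- Adjacency in the proper sum-essential graph `N(M)`. -/
def AdjP (A B : Submodule R M) : Prop :=
  IsVertexP A ∧ IsVertexP B ∧ A ≠ B ∧ IsEssentialSubmodule (A ⊔ B)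

/-- `U` is a uniform submodule: nonzero, and any two nonzero submodules of it intersect. -/
def UniformSubmodule (U : Submodule R M) : Prop :=
  U ≠ ⊥ ∧ ∀ A B : Submodule R M, A ≤ U → B ≤ U → A ≠ ⊥ → B ≠ ⊥ → A ⊓ B ≠ ⊥

/-- `C` is a complement of `U` in `M`: maximal with respect to `U ⊓ C = ⊥`. -/
def IsComplementOf (C U : Submodule R M) : Prop :=
  U ⊓ C = ⊥ ∧ ∀ D : Submodule R M, U ⊓ D = ⊥ → C ≤ D → D = C

open Submodule

lemma isComplementOf_iff_maximal {C U : Submodule R M} :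
    IsComplementOf C U ↔ Maximal (Disjoint U) C := by
  simp only [IsComplementOf, Maximal, ← disjoint_iff]
  exact and_congr_right fun _ =>
    forall₂_congr fun D hD => ⟨fun h hCD => (h hCD).le, fun h hCD => le_antisymm (h hCD) hCD⟩

lemma IsComplementOf.disjoint {C U : Submodule R M} (h : IsComplementOf C U) : Disjoint U C :=
  disjoint_iff.mpr h.1

lemma exists_isComplementOf_ge {A X : Submodule R M} (hAX : Disjoint A X) :
    ∃ D, X ≤ D ∧ IsComplementOf D A := by
  simp only [isComplementOf_iff_maximal]
  refine zorn_le_nonempty₀ _ (fun c hc hchain D hD => ⟨sSup c, ?_, fun _ => le_sSup⟩) X hAX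
  exact hchain.directedOn.disjoint_sSup_right.mpr fun _ hB => hc hB

lemma IsEssentialSubmodule.mono {N N' : Submodule R M} (h : IsEssentialSubmodule N)
    (hle : N ≤ N') : IsEssentialSubmodule N' :=
  fun B hB hN'B => h B hB (le_bot_iff.mp (hN'B ▸ inf_le_inf_right B hle))

lemma not_isEssentialSubmodule_of_disjoint {A B : Submodule R M} (hAB : Disjoint A B)
    (hB : B ≠ ⊥) : ¬ IsEssentialSubmodule A :=
  fun hA => hA B hB hAB.eq_bot

lemma IsComplementOf.isEssentialSubmodule_sup {A D : Submodule R M} (h : IsComplementOf D A) :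
    IsEssentialSubmodule (A ⊔ D) := by
  intro B hB hADB
  -- modularity: `A` is disjoint from `D ⊔ B`, so `D ⊔ B = D` by maximality of `D`
  have hDB : D ⊔ B = D :=
    h.2 _ (disjoint_iff.mp (h.disjoint.disjoint_sup_right_of_disjoint_sup_left
      (disjoint_iff.mpr hADB))) le_sup_left
  have hBD : B ≤ A ⊔ D := le_sup_right.trans (hDB.le.trans le_sup_right)
  exact hB (by rwa [inf_eq_right.mpr hBD] at hADB)

lemma isVertexP_of_disjoint {A B : Submodule R M} (hAB : Disjoint A B) (hA : A ≠ ⊥)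
    (hB : B ≠ ⊥) : IsVertexP A :=
  ⟨hA, hAB.symm.ne_top_of_ne_bot hB, not_isEssentialSubmodule_of_disjoint hAB hB⟩

lemma adjP_of_disjoint {A B F : Submodule R M} (hAF : Disjoint A F) (hBF : Disjoint B F)
    (hF : F ≠ ⊥) (hAB : IsEssentialSubmodule (A ⊔ B)) : AdjP A B := by
  have hA := not_isEssentialSubmodule_of_disjoint hAF hF
  have hB := not_isEssentialSubmodule_of_disjoint hBF hF
  have hA0 : A ≠ ⊥ := by rintro rfl; exact hB (by simpa using hAB)
  have hB0 : B ≠ ⊥ := by rintro rfl; exact hA (by simpa using hAB)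
  refine ⟨isVertexP_of_disjoint hAF hA0 hF, isVertexP_of_disjoint hBF hB0 hF, ?_, hAB⟩
  rintro rfl
  exact hA (by simpa using hAB)

lemma IsAtom.le_of_mem {F N : Submodule R M} (hF : IsAtom F) {f : M} (hfF : f ∈ F)
    (hf0 : f ≠ 0) (hfN : f ∈ N) : F ≤ N := by
  have hspan : span R {f} = F :=
    (hF.le_iff_eq (by simpa using hf0)).mp ((span_singleton_le_iff_mem f F).mpr hfF)
  exact hspan ▸ (span_singleton_le_iff_mem f N).mpr hfN

lemma disjoint_span_singleton_sub {U F : Submodule R M} (hUF : Disjoint U F) {u f : M}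
    (hu : u ∈ U) (hf : f ∈ F) (hr : ∀ r : R, r • u = 0 → r • f = 0) :
    Disjoint (span R {u - f}) F := by
  rw [disjoint_def]
  intro x hxT hxF
  obtain ⟨r, rfl⟩ := mem_span_singleton.mp hxT
  have hruF : r • u ∈ F := by
    simpa [smul_sub] using add_mem hxF (F.smul_mem r hf)
  have hru : r • u = 0 := disjoint_def.mp hUF _ (U.smul_mem r hu) hruF
  rw [smul_sub, hru, hr r hru, sub_zero]

lemma exists_adjP_disjoint {U F : Submodule R M} (hF : IsAtom F) (hUF : Disjoint U F)
    {u f : M} (hu : u ∈ U) (hf : f ∈ F) (hf0 : f ≠ 0) (hr : ∀ r : R, r • u = 0 → r • f = 0) :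
    ∃ N, AdjP U N ∧ Disjoint N F := by
  set T := span R {u - f}
  obtain ⟨E, -, hE⟩ := exists_isComplementOf_ge (A := U ⊔ F) disjoint_bot_right
  have hTF : Disjoint T F := disjoint_span_singleton_sub hUF hu hf hr
  have hFUT : F ≤ U ⊔ T := hF.le_of_mem hf hf0 <| by
    simpa using sub_mem (mem_sup_left hu) (mem_sup_right (mem_span_singleton_self (u - f)))
  have hNF : Disjoint (T ⊔ E) F := by
    refine (hTF.symm.disjoint_sup_right_of_disjoint_sup_left ?_).symm
    refine hE.disjoint.mono_left (sup_le le_sup_right ?_)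
    exact (span_singleton_le_iff_mem _ _).mpr (sub_mem (mem_sup_left hu) (mem_sup_right hf))
  refine ⟨T ⊔ E, adjP_of_disjoint hUF hNF hF.ne_bot (hE.isEssentialSubmodule_sup.mono ?_), hNF⟩
  rw [← sup_assoc]
  exact sup_le_sup_right (sup_le le_sup_left hFUT) E

theorem stmt12_general (U C : Submodule R M) (hUnt : U ≠ ⊥ ∧ U ≠ ⊤)
    (hC : IsComplementOf C U)
    (huniq : ∀ D : Submodule R M, IsComplementOf D U → D = C)
    (F : Submodule R M) (hF : IsAtom F) (hFU : ¬ F ≤ U)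
    (f : M) (hfF : f ∈ F) (hf0 : f ≠ 0)
    (u : M) (huU : u ∈ U)
    (hr : ∀ r : R, r • u = 0 → r • f = 0) :
    ∃ C₁ C₂ : Submodule R M, AdjP U C₁ ∧ AdjP U C₂ ∧ C₁ ≠ C₂ := by
  have hUF : Disjoint U F := (hF.not_le_iff_disjoint.mp hFU).symm
  have hFC : F ≤ C := by
    obtain ⟨D, hFD, hD⟩ := exists_isComplementOf_ge hUF
    exact huniq D hD ▸ hFD
  obtain ⟨N, hUN, hNF⟩ := exists_adjP_disjoint hF hUF huU hfF hf0 hr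
  have hCvert : IsVertexP C :=
    isVertexP_of_disjoint hC.disjoint.symm (ne_bot_of_le_ne_bot hF.ne_bot hFC) hUnt.1
  refine ⟨C, N, ⟨hUN.1, hCvert, hC.disjoint.ne hUnt.1, hC.isEssentialSubmodule_sup⟩, hUN, ?_⟩
  rintro rfl
  exact hF.ne_bot (disjoint_self.mp (hNF.mono_left hFC))

/-- Let `U` be a nontrivial uniform submodule with a nonzero unique
complement `C ⊆ soc(M)`. If there are a simple submodule `F ⊄ U`, nonzero `f ∈ F`
and nonzero `u ∈ U` with `r • u = 0 → r • f = 0` for all `r`, then `U` has degree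
greater than 1 in `N(M)`. -/
theorem stmt12 (U C : Submodule R M) (hUnt : U ≠ ⊥ ∧ U ≠ ⊤)
    (hUu : UniformSubmodule U)
    (hC : IsComplementOf C U) (hC0 : C ≠ ⊥)
    (hCsoc : C ≤ sSup {S : Submodule R M | IsAtom S})
    (huniq : ∀ D : Submodule R M, IsComplementOf D U → D = C)
    (F : Submodule R M) (hF : IsAtom F) (hFU : ¬ F ≤ U)
    (f : M) (hfF : f ∈ F) (hf0 : f ≠ 0)
    (u : M) (huU : u ∈ U) (hu0 : u ≠ 0)
    (hr : ∀ r : R, r • u = 0 → r • f = 0) :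
    ∃ C₁ C₂ : Submodule R M, AdjP U C₁ ∧ AdjP U C₂ ∧ C₁ ≠ C₂ :=
  stmt12_general U C hUnt hC huniq F hF hFU f hfF hf0 u huU hr
end

section
/- Let M be a module whose sum-essential graph S(M) has at least 2 vertices. Then S(M) is triangle-free if and only if either M is a direct sum of two non-isomorphic simple modules, or M is a chain (uniserial) module with exactly two nontrivial submodules; in either case S(M) is the complete graph on two vertices. Consequently the girth of S(M) is 3 or ∞. -/
variable {R : Type*} [Ring R] {M : Type*} [AddCommGroup M] [Module R M]

/-- The sum-essential graph of `M` as a `SimpleGraph` on the nontrivial submodules. -/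
def sumEssentialGraph (R M : Type*) [Ring R] [AddCommGroup M] [Module R M] :
    SimpleGraph {N : Submodule R M // N ≠ ⊥ ∧ N ≠ ⊤} where
  Adj A B := A ≠ B ∧ IsEssentialSubmodule ((A : Submodule R M) ⊔ (B : Submodule R M))
  symm := by
    constructor
    rintro A B ⟨h1, h2⟩
    exact ⟨h1.symm, by rwa [sup_comm]⟩
  loopless := by
    constructor
    rintro A ⟨h1, -⟩
    exact h1 rfl

/-! If two nonzero submodules `U`, `V` meet trivially, enlarge `V` to a submodule `C` maximal with
`U ⊓ C = ⊥`; then `U ⊔ C` is essential, and `U`, `C`, `U ⊔ C` would be a triangle unless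
`U ⊔ C = M`. A submodule `0 < W < U` yields the triangle `W ⊔ C`, `U`, `C'` with `C' ⊇ C` maximal
with `W ⊓ C' = 0`, and an isomorphism `U ≅ C` yields the triangle formed by `U`, `C` and its graph.
So `M = U ⊕ C` with `U`, `C` simple and non-isomorphic; any further nontrivial submodule would be a
common complement of `U` and `C`, making both isomorphic to the quotient by it.
If no two nonzero submodules meet trivially, every nonzero submodule is essential, so any three
nontrivial submodules form a triangle: there are at most two, and `A`, `B`, `A ⊓ B` forces a chain.
With two vertices there is no cycle, whence the girth is `3` or `∞`. -/

section Lattice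

variable {α : Type*}

theorem isCompl_of_isAtom_of_isCoatom [Lattice α] [BoundedOrder α] {a b : α} (ha : IsAtom a)
    (ha' : IsCoatom a) (hb : b ≠ ⊥) (hb' : b ≠ ⊤) (hba : b ≠ a) : IsCompl b a := by
  have hnle : ¬ b ≤ a := fun h => (ha.le_iff.mp h).elim hb hba
  have hnge : ¬ a ≤ b := fun h => (ha'.le_iff.mp h).elim hb' hba
  exact ⟨disjoint_iff.mpr <| ha.lt_iff.mp <|
      inf_le_right.lt_of_ne fun h => hnge (h.ge.trans inf_le_left),
    codisjoint_iff.mpr <| ha'.lt_iff.mp <|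
      le_sup_right.lt_of_ne fun h => hnle (le_sup_left.trans h.ge)⟩

theorem exists_le_maximal_disjoint [CompleteLattice α] [IsCompactlyGenerated α] {a b : α}
    (h : Disjoint a b) : ∃ c, b ≤ c ∧ Maximal (Disjoint a) c :=
  zorn_le_nonempty₀ {c | Disjoint a c} (fun s hs hchain _ _ =>
    ⟨sSup s, hchain.directedOn.disjoint_sSup_right.mpr fun _ hc => hs hc, fun _ => le_sSup⟩) b h

end Lattice

namespace SimpleGraph

variable {V : Type*} {G : SimpleGraph V}

theorem egirth_eq_three_of_adj {a b c : V} (hab : G.Adj a b) (hac : G.Adj a c) (hbc : G.Adj b c) :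
    G.egirth = 3 := by
  classical
  obtain ⟨_, w, hw, hlen⟩ := G.is3Clique_iff_exists_cycle_length_three.mp
    ⟨_, G.is3Clique_triple_iff.mpr ⟨hab, hac, hbc⟩⟩
  exact le_antisymm (by simpa [hlen] using G.egirth_le_length hw) G.three_le_egirth

theorem IsAcyclic.of_forall_eq_or_eq (a b : V) (h : ∀ v, v = a ∨ v = b) : G.IsAcyclic := by
  classical
  refine .of_card_le_two ?_
  calc ENat.card V ≤ ENat.card Bool := ENat.card_le_card_of_injective (f := fun v => decide (v = a))
        fun v w hvw => by rcases h v with rfl | rfl <;> rcases h w with rfl | rfl <;> simp_all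
    _ = 2 := by simp

end SimpleGraph

namespace Submodule

variable {D C : Submodule R M}

theorem isCompl_range_subtype_add (h : IsCompl D C) (f : D →ₗ[R] C) :
    IsCompl (LinearMap.range (D.subtype + C.subtype ∘ₗ f)) C := by
  constructor
  · rw [disjoint_def]
    rintro _ ⟨d, rfl⟩ hdC
    have hd : (d : M) ∈ C := by simpa using sub_mem hdC (f d).2
    have hd0 : d = 0 := Subtype.ext (disjoint_def.mp h.disjoint _ d.2 hd)
    simp [hd0]
  · rw [codisjoint_iff, eq_top_iff, ← h.sup_eq_top]
    intro m hm
    obtain ⟨d, hd, c, hc, rfl⟩ := mem_sup.mp hm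
    have hdc : d + c = (D.subtype + C.subtype ∘ₗ f) ⟨d, hd⟩ + (c - f ⟨d, hd⟩) := by simp
    rw [hdc]
    exact add_mem_sup (LinearMap.mem_range_self _ _) (sub_mem hc (f _).2)

theorem range_subtype_add_comp_symm (f : D ≃ₗ[R] C) :
    LinearMap.range (C.subtype + D.subtype ∘ₗ (f.symm : C →ₗ[R] D)) =
      LinearMap.range (D.subtype + C.subtype ∘ₗ (f : D →ₗ[R] C)) := by
  ext x
  constructor <;> rintro ⟨y, rfl⟩
  exacts [⟨f.symm y, by simp [add_comm]⟩, ⟨f y, by simp [add_comm]⟩]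

end Submodule

def HasTriangleS (R M : Type*) [Ring R] [AddCommGroup M] [Module R M] : Prop :=
  ∃ A B C : Submodule R M, AdjS A B ∧ AdjS B C ∧ AdjS A C

variable {A B C D U V N : Submodule R M}

theorem IsEssentialSubmodule.top : IsEssentialSubmodule (⊤ : Submodule R M) :=
  fun _ hB => by rwa [top_inf_eq]

theorem IsEssentialSubmodule.mono_s18 (hA : IsEssentialSubmodule A) (h : A ≤ B) :
    IsEssentialSubmodule B :=
  fun X hX hBX => hA X hX (eq_bot_mono (inf_le_inf_right X h) hBX)

theorem IsCompl.isEssentialSubmodule_sup (h : IsCompl A B) : IsEssentialSubmodule (A ⊔ B) :=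
  h.sup_eq_top ▸ .top

theorem isEssentialSubmodule_sup_of_maximal_disjoint (h : Maximal (Disjoint U) C) :
    IsEssentialSubmodule (U ⊔ C) := by
  intro X hX hUCX
  have hC : C = C ⊔ X :=
    h.eq_of_le (h.prop.disjoint_sup_right_of_disjoint_sup_left (disjoint_iff.mpr hUCX)) le_sup_left
  have hXle : X ≤ U ⊔ C := le_sup_right.trans (hC.ge.trans le_sup_right)
  exact hX ((inf_eq_right.mpr hXle).symm.trans hUCX)

theorem isEssentialSubmodule_of_le_total (hchain : ∀ A B : Submodule R M, A ≤ B ∨ B ≤ A)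
    (hN : N ≠ ⊥) : IsEssentialSubmodule N := fun X hX => by
  rcases hchain N X with h | h
  · rwa [inf_eq_left.mpr h]
  · rwa [inf_eq_right.mpr h]

theorem IsVertexS.of_disjoint (h : Disjoint A B) (hA : A ≠ ⊥) (hB : B ≠ ⊥) : IsVertexS A :=
  ⟨hA, fun hA' => hB (top_disjoint.mp (hA' ▸ h))⟩

theorem AdjS.of_isCompl (h : IsCompl A B) (hA : A ≠ ⊥) (hB : B ≠ ⊥) : AdjS A B :=
  ⟨.of_disjoint h.disjoint hA hB, .of_disjoint h.disjoint.symm hB hA, h.disjoint.ne hA,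
    h.isEssentialSubmodule_sup⟩

theorem AdjS.sumEssentialGraph_adj (h : AdjS A B) :
    (sumEssentialGraph R M).Adj ⟨A, h.1⟩ ⟨B, h.2.1⟩ :=
  ⟨fun e => h.2.2.1 (congrArg Subtype.val e), h.2.2.2⟩

theorem not_hasTriangleS_of_forall_eq_or_eq (h : ∀ N, IsVertexS N → N = A ∨ N = B) :
    ¬ HasTriangleS R M := by
  rintro ⟨X, Y, Z, ⟨hX, hY, hXY, -⟩, ⟨-, hZ, hYZ, -⟩, ⟨-, -, hXZ, -⟩⟩
  rcases h X hX with rfl | rfl <;> rcases h Y hY with rfl | rfl <;> rcases h Z hZ with rfl | rfl <;>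
    contradiction

theorem adjS_of_forall_isEssentialSubmodule
    (huni : ∀ N : Submodule R M, N ≠ ⊥ → IsEssentialSubmodule N)
    (hA : IsVertexS A) (hB : IsVertexS B) (hAB : A ≠ B) : AdjS A B :=
  ⟨hA, hB, hAB, huni _ (ne_bot_of_le_ne_bot hA.1 le_sup_left)⟩

theorem hasTriangleS_of_forall_isEssentialSubmodule
    (huni : ∀ N : Submodule R M, N ≠ ⊥ → IsEssentialSubmodule N)
    (hA : IsVertexS A) (hB : IsVertexS B) (hC : IsVertexS C) (hAB : A ≠ B) (hBC : B ≠ C)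
    (hAC : A ≠ C) : HasTriangleS R M :=
  ⟨A, B, C, adjS_of_forall_isEssentialSubmodule huni hA hB hAB,
    adjS_of_forall_isEssentialSubmodule huni hB hC hBC,
    adjS_of_forall_isEssentialSubmodule huni hA hC hAC⟩

theorem eq_or_eq_of_forall_isEssentialSubmodule
    (huni : ∀ N : Submodule R M, N ≠ ⊥ → IsEssentialSubmodule N) (hT : ¬ HasTriangleS R M)
    (hA : IsVertexS A) (hB : IsVertexS B) (hAB : A ≠ B) : ∀ N, IsVertexS N → N = A ∨ N = B := by
  intro N hN
  by_contra! hne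
  exact hT (hasTriangleS_of_forall_isEssentialSubmodule huni hN hA hB hne.1 hAB hne.2)

theorem le_total_of_forall_isEssentialSubmodule
    (huni : ∀ N : Submodule R M, N ≠ ⊥ → IsEssentialSubmodule N) (hT : ¬ HasTriangleS R M)
    (P Q : Submodule R M) : P ≤ Q ∨ Q ≤ P := by
  by_contra! ⟨hPQ, hQP⟩
  have hP : IsVertexS P := ⟨fun h => hPQ (h ▸ bot_le), fun h => hQP (h ▸ le_top)⟩
  have hQ : IsVertexS Q := ⟨fun h => hQP (h ▸ bot_le), fun h => hPQ (h ▸ le_top)⟩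
  have hPQv : IsVertexS (P ⊓ Q) := ⟨huni P hP.1 Q hQ.1, ne_top_of_le_ne_top hP.2 inf_le_left⟩
  exact hT (hasTriangleS_of_forall_isEssentialSubmodule huni hP hQ hPQv
    (fun h => hPQ h.le) (fun h => hQP (h.le.trans inf_le_left))
    (fun h => hPQ (h.le.trans inf_le_right)))

theorem hasTriangleS_of_disjoint (h : Disjoint A B) (hA : A ≠ ⊥) (hB : B ≠ ⊥)
    (hess : IsEssentialSubmodule (A ⊔ B)) (htop : A ⊔ B ≠ ⊤) : HasTriangleS R M := by
  have hA' : IsVertexS A := .of_disjoint h hA hB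
  have hB' : IsVertexS B := .of_disjoint h.symm hB hA
  have hAB : IsVertexS (A ⊔ B) := ⟨ne_bot_of_le_ne_bot hA le_sup_left, htop⟩
  exact ⟨A, B, A ⊔ B, ⟨hA', hB', h.ne hA, hess⟩,
    ⟨hB', hAB, fun e => hA (h.eq_bot_of_le (le_sup_left.trans e.ge)), hess.mono_s18 le_sup_right⟩,
    ⟨hA', hAB, fun e => hB (h.symm.eq_bot_of_le (le_sup_right.trans e.ge)), hess.mono_s18 le_sup_right⟩⟩

theorem exists_isCompl_of_not_hasTriangleS (hT : ¬ HasTriangleS R M) (h : Disjoint U V)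
    (hU : U ≠ ⊥) (hV : V ≠ ⊥) : ∃ C, IsCompl U C ∧ C ≠ ⊥ := by
  obtain ⟨C, hVC, hC⟩ := exists_le_maximal_disjoint h
  have hC0 : C ≠ ⊥ := ne_bot_of_le_ne_bot hV hVC
  refine ⟨C, ⟨hC.prop, codisjoint_iff.mpr ?_⟩, hC0⟩
  by_contra htop
  exact hT (hasTriangleS_of_disjoint hC.prop hU hC0
    (isEssentialSubmodule_sup_of_maximal_disjoint hC) htop)

theorem isAtom_of_isCompl (hT : ¬ HasTriangleS R M) (h : IsCompl D C) (hD : D ≠ ⊥) (hC : C ≠ ⊥) :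
    IsAtom D := by
  refine ⟨hD, fun W hWD => ?_⟩
  by_contra hW
  obtain ⟨C', hCC', hC'⟩ := exists_le_maximal_disjoint (h.disjoint.mono_left hWD.le)
  have hWC : W ⊔ C ≠ ⊤ := fun e => hWD.ne (eq_of_le_of_inf_le_of_sup_le hWD.le
    (h.inf_eq_bot ▸ bot_le) (by rw [e, h.sup_eq_top]))
  have hDv : IsVertexS D := .of_disjoint h.disjoint hD hC
  have hWCv : IsVertexS (W ⊔ C) := ⟨ne_bot_of_le_ne_bot hC le_sup_right, hWC⟩
  have hC'v : IsVertexS C' := .of_disjoint hC'.prop.symm (ne_bot_of_le_ne_bot hC hCC') hW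
  exact hT ⟨W ⊔ C, D, C',
    ⟨hWCv, hDv, fun e => hC (h.disjoint.symm.eq_bot_of_le (le_sup_right.trans e.le)),
      h.isEssentialSubmodule_sup.mono_s18 (sup_le le_sup_right (le_sup_right.trans le_sup_left))⟩,
    ⟨hDv, hC'v, fun e => hW (hC'.prop.eq_bot_of_le (hWD.le.trans e.le)),
      h.isEssentialSubmodule_sup.mono_s18 (sup_le_sup_left hCC' D)⟩,
    ⟨hWCv, hC'v, fun e => hW (hC'.prop.eq_bot_of_le (le_sup_left.trans e.le)),
      (isEssentialSubmodule_sup_of_maximal_disjoint hC').mono_s18 (sup_le_sup_right le_sup_left C')⟩⟩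

theorem hasTriangleS_of_linearEquiv (h : IsCompl D C) (hD : D ≠ ⊥) (hC : C ≠ ⊥) (f : D ≃ₗ[R] C) :
    HasTriangleS R M := by
  set X := LinearMap.range (D.subtype + C.subtype ∘ₗ (f : D →ₗ[R] C))
  have hXC : IsCompl X C := Submodule.isCompl_range_subtype_add h f
  have hXD : IsCompl X D := by
    simpa only [X, ← Submodule.range_subtype_add_comp_symm f] using
      Submodule.isCompl_range_subtype_add h.symm f.symm
  have hX : X ≠ ⊥ := fun e => hD (h.disjoint.eq_bot_of_le (le_top.trans
    (by simpa [e] using hXC.sup_eq_top.ge)))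
  exact ⟨X, D, C, .of_isCompl hXD hX hD, .of_isCompl h hD hC, .of_isCompl hXC hX hC⟩

theorem eq_or_eq_of_isCompl_of_isAtom (h : IsCompl D C) (hD : IsAtom D) (hC : IsAtom C)
    (hiso : IsEmpty (D ≃ₗ[R] C)) : ∀ N, IsVertexS N → N = D ∨ N = C := by
  intro N hN
  by_contra! hne
  have hND : IsCompl N D :=
    isCompl_of_isAtom_of_isCoatom hD (h.isCoatom_iff_isAtom.mpr hC) hN.1 hN.2 hne.1
  have hNC : IsCompl N C :=
    isCompl_of_isAtom_of_isCoatom hC (h.symm.isCoatom_iff_isAtom.mpr hD) hN.1 hN.2 hne.2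
  exact hiso.false ((Submodule.quotientEquivOfIsCompl N D hND).symm.trans
    (Submodule.quotientEquivOfIsCompl N C hNC))

theorem directSum_or_chain_of_not_hasTriangleS
    (h2 : ∃ A B : Submodule R M, IsVertexS A ∧ IsVertexS B ∧ A ≠ B) (hT : ¬ HasTriangleS R M) :
    (∃ S₁ S₂ : Submodule R M, IsAtom S₁ ∧ IsAtom S₂ ∧ S₁ ⊓ S₂ = ⊥ ∧ S₁ ⊔ S₂ = ⊤ ∧
        IsEmpty (↥S₁ ≃ₗ[R] ↥S₂)) ∨
      ((∀ A B : Submodule R M, A ≤ B ∨ B ≤ A) ∧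
        ∃ A B : Submodule R M, IsVertexS A ∧ IsVertexS B ∧ A ≠ B ∧
          ∀ N : Submodule R M, IsVertexS N → N = A ∨ N = B) := by
  by_cases huni : ∀ N : Submodule R M, N ≠ ⊥ → IsEssentialSubmodule N
  · obtain ⟨A, B, hA, hB, hAB⟩ := h2
    exact .inr ⟨le_total_of_forall_isEssentialSubmodule huni hT, A, B, hA, hB, hAB,
      eq_or_eq_of_forall_isEssentialSubmodule huni hT hA hB hAB⟩
  · obtain ⟨U, hU, V, hV, hUV⟩ : ∃ U : Submodule R M, U ≠ ⊥ ∧ ∃ V, V ≠ ⊥ ∧ U ⊓ V = ⊥ := by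
      simpa [IsEssentialSubmodule] using huni
    obtain ⟨C, hUC, hC⟩ := exists_isCompl_of_not_hasTriangleS hT (disjoint_iff.mpr hUV) hU hV
    exact .inl ⟨U, C, isAtom_of_isCompl hT hUC hU hC, isAtom_of_isCompl hT hUC.symm hC hU,
      hUC.inf_eq_bot, hUC.sup_eq_top, ⟨fun f => hT (hasTriangleS_of_linearEquiv hUC hU hC f)⟩⟩

theorem exists_adjS_forall_eq_or_eq
    (hM : (∃ S₁ S₂ : Submodule R M, IsAtom S₁ ∧ IsAtom S₂ ∧ S₁ ⊓ S₂ = ⊥ ∧ S₁ ⊔ S₂ = ⊤ ∧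
        IsEmpty (↥S₁ ≃ₗ[R] ↥S₂)) ∨
      ((∀ A B : Submodule R M, A ≤ B ∨ B ≤ A) ∧
        ∃ A B : Submodule R M, IsVertexS A ∧ IsVertexS B ∧ A ≠ B ∧
          ∀ N : Submodule R M, IsVertexS N → N = A ∨ N = B)) :
    ∃ A B : Submodule R M, AdjS A B ∧ ∀ N : Submodule R M, IsVertexS N → N = A ∨ N = B := by
  rcases hM with ⟨S₁, S₂, h₁, h₂, hinf, hsup, hiso⟩ | ⟨hchain, A, B, hA, hB, hAB, hN⟩
  · have hS : IsCompl S₁ S₂ := ⟨disjoint_iff.mpr hinf, codisjoint_iff.mpr hsup⟩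
    exact ⟨S₁, S₂, .of_isCompl hS h₁.1 h₂.1, eq_or_eq_of_isCompl_of_isAtom hS h₁ h₂ hiso⟩
  · exact ⟨A, B, adjS_of_forall_isEssentialSubmodule
      (fun _ => isEssentialSubmodule_of_le_total hchain) hA hB hAB, hN⟩

/-- `S(M)` (with at least two vertices) is triangle-free iff `M` is a
direct sum of two non-isomorphic simple modules or a chain module with exactly two
nontrivial submodules; in either case `S(M)` is the complete graph on two vertices.
Consequently the girth of `S(M)` is `3` or `∞`. -/
theorem stmt18 (h2 : ∃ A B : Submodule R M, IsVertexS A ∧ IsVertexS B ∧ A ≠ B) :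
    ((¬ ∃ A B C : Submodule R M, AdjS A B ∧ AdjS B C ∧ AdjS A C) ↔
        ((∃ S₁ S₂ : Submodule R M, IsAtom S₁ ∧ IsAtom S₂ ∧ S₁ ⊓ S₂ = ⊥ ∧ S₁ ⊔ S₂ = ⊤ ∧
            IsEmpty (↥S₁ ≃ₗ[R] ↥S₂)) ∨
          ((∀ A B : Submodule R M, A ≤ B ∨ B ≤ A) ∧
            ∃ A B : Submodule R M, IsVertexS A ∧ IsVertexS B ∧ A ≠ B ∧
              ∀ N : Submodule R M, IsVertexS N → N = A ∨ N = B))) ∧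
    ((¬ ∃ A B C : Submodule R M, AdjS A B ∧ AdjS B C ∧ AdjS A C) →
        ∃ A B : Submodule R M, AdjS A B ∧
          ∀ N : Submodule R M, IsVertexS N → N = A ∨ N = B) ∧
    ((sumEssentialGraph R M).egirth = 3 ∨ (sumEssentialGraph R M).egirth = ⊤) := by
  have forward := directSum_or_chain_of_not_hasTriangleS h2
  refine ⟨⟨forward, fun hM => ?_⟩, fun hT => exists_adjS_forall_eq_or_eq (forward hT), ?_⟩
  · obtain ⟨A, B, -, hN⟩ := exists_adjS_forall_eq_or_eq hM
    exact not_hasTriangleS_of_forall_eq_or_eq hN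
  by_cases hT : HasTriangleS R M
  · obtain ⟨A, B, C, hAB, hBC, hAC⟩ := hT
    exact .inl (SimpleGraph.egirth_eq_three_of_adj hAB.sumEssentialGraph_adj
      hAC.sumEssentialGraph_adj hBC.sumEssentialGraph_adj)
  · obtain ⟨A, B, hAB, hN⟩ := exists_adjS_forall_eq_or_eq (forward hT)
    exact .inr (SimpleGraph.egirth_eq_top.mpr (.of_forall_eq_or_eq ⟨A, hAB.1⟩ ⟨B, hAB.2.1⟩
      fun v => (hN v.1 v.2).imp Subtype.ext Subtype.ext))
end
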